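/- arXiv:1907.09070 — 6 statements merged into one kernel-verified Lean document; each statement's English description precedes it below -/
import Mathlib

section
/- For every signaling rule π with k signals, the posterior-correlation matrix Ξ_π is completely positive and its rows sum to the prior, i.e., Ξ_π 𝟙 = p_o where 𝟙 ∈ ℝ^n is the all-ones vector. -/
/-
Grouping the sum over signals, `Ξ_π = B Bᵀ` where column `s` of `B` is `√p(s) · p_s`, which is
entrywise nonnegative. For the row sums, each posterior `p_s` is a probability vector, so row `i`
of `Ξ_π 𝟙` is `∑_s p(s) p_s(i) = ∑_s π(s|z_i) p_o(i) = p_o(i)`.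
-/

open Matrix BigOperators

/-- A real `n × n` matrix is completely positive if it factors as `B * Bᵀ`
for some entrywise-nonnegative `n × k` matrix `B`. -/
def IsCompletelyPositive {n : ℕ} (Ξ : Matrix (Fin n) (Fin n) ℝ) : Prop :=
  ∃ (k : ℕ) (B : Matrix (Fin n) (Fin k) ℝ), (∀ i j, 0 ≤ B i j) ∧ Ξ = B * Bᵀ

/-- Probability that signal `s` is sent: `p(s) = ∑ j, π(s|z_j) p_o(j)`. -/
noncomputable def sigProb {n k : ℕ} (π : Fin k → Fin n → ℝ) (p_o : Fin n → ℝ) (s : Fin k) : ℝ :=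
  ∑ j, π s j * p_o j

/-- Posterior probability of state `j` given signal `s`. -/
noncomputable def posterior {n k : ℕ} (π : Fin k → Fin n → ℝ) (p_o : Fin n → ℝ)
    (s : Fin k) (j : Fin n) : ℝ :=
  π s j * p_o j / sigProb π p_o s

/-- Posterior-correlation matrix `Ξ_π[i,j] = ∑_{s : p(s) > 0} p(s) p_s(i) p_s(j)`. -/
noncomputable def XiPi {n k : ℕ} (π : Fin k → Fin n → ℝ) (p_o : Fin n → ℝ) :
    Matrix (Fin n) (Fin n) ℝ :=
  Matrix.of fun i j => ∑ s : Fin k,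
    if 0 < sigProb π p_o s then
      sigProb π p_o s * posterior π p_o s i * posterior π p_o s j
    else 0

section Signaling

variable {n k : ℕ} {π : Fin k → Fin n → ℝ} {p_o : Fin n → ℝ}

theorem sigProb_nonneg (hπnn : ∀ s j, 0 ≤ π s j) (hp : ∀ j, 0 ≤ p_o j) (s : Fin k) :
    0 ≤ sigProb π p_o s :=
  Finset.sum_nonneg fun j _ => mul_nonneg (hπnn s j) (hp j)

theorem posterior_nonneg (hπnn : ∀ s j, 0 ≤ π s j) (hp : ∀ j, 0 ≤ p_o j) (s : Fin k) (i : Fin n) :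
    0 ≤ posterior π p_o s i :=
  div_nonneg (mul_nonneg (hπnn s i) (hp i)) (sigProb_nonneg hπnn hp s)

theorem sum_posterior {s : Fin k} (hs : 0 < sigProb π p_o s) :
    ∑ j, posterior π p_o s j = 1 := by
  simp only [posterior, ← Finset.sum_div]
  exact div_self hs.ne'

/-- For a null signal both sides vanish: `p(s) = 0` is a sum of the nonnegative terms
`π(s|z_j) p_o(j)`. -/
theorem ite_sigProb_mul_posterior (hπnn : ∀ s j, 0 ≤ π s j) (hp : ∀ j, 0 ≤ p_o j)
    (s : Fin k) (i : Fin n) :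
    (if 0 < sigProb π p_o s then sigProb π p_o s * posterior π p_o s i else 0)
      = π s i * p_o i := by
  by_cases hs : 0 < sigProb π p_o s
  · rw [if_pos hs, posterior, mul_div_cancel₀ _ hs.ne']
  · have hzero : sigProb π p_o s = 0 := le_antisymm (not_lt.mp hs) (sigProb_nonneg hπnn hp s)
    rw [if_neg hs, eq_comm]
    exact (Finset.sum_eq_zero_iff_of_nonneg fun j _ => mul_nonneg (hπnn s j) (hp j)).mp hzero i
      (Finset.mem_univ i)

noncomputable def posteriorFactor (π : Fin k → Fin n → ℝ) (p_o : Fin n → ℝ) :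
    Matrix (Fin n) (Fin k) ℝ :=
  Matrix.of fun i s =>
    if 0 < sigProb π p_o s then Real.sqrt (sigProb π p_o s) * posterior π p_o s i else 0

theorem posteriorFactor_nonneg (hπnn : ∀ s j, 0 ≤ π s j) (hp : ∀ j, 0 ≤ p_o j)
    (i : Fin n) (s : Fin k) : 0 ≤ posteriorFactor π p_o i s := by
  rw [posteriorFactor, of_apply]
  split_ifs
  · exact mul_nonneg (Real.sqrt_nonneg _) (posterior_nonneg hπnn hp s i)
  · exact le_rfl

theorem XiPi_eq_posteriorFactor_mul_transpose :
    XiPi π p_o = posteriorFactor π p_o * (posteriorFactor π p_o)ᵀ := by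
  ext i j
  simp only [XiPi, posteriorFactor, mul_apply, transpose_apply, of_apply]
  refine Finset.sum_congr rfl fun s _ => ?_
  split_ifs with hs
  · calc sigProb π p_o s * posterior π p_o s i * posterior π p_o s j
        = (√(sigProb π p_o s) * √(sigProb π p_o s)) * posterior π p_o s i
            * posterior π p_o s j := by rw [Real.mul_self_sqrt hs.le]
      _ = √(sigProb π p_o s) * posterior π p_o s i
            * (√(sigProb π p_o s) * posterior π p_o s j) := by ring
  · rw [zero_mul]

theorem isCompletelyPositive_XiPi (hπnn : ∀ s j, 0 ≤ π s j) (hp : ∀ j, 0 ≤ p_o j) :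
    IsCompletelyPositive (XiPi π p_o) :=
  ⟨k, posteriorFactor π p_o, posteriorFactor_nonneg hπnn hp,
    XiPi_eq_posteriorFactor_mul_transpose⟩

theorem XiPi_mulVec_one (hπnn : ∀ s j, 0 ≤ π s j) (hp : ∀ j, 0 ≤ p_o j)
    (hπsum : ∀ j, ∑ s, π s j = 1) :
    (XiPi π p_o).mulVec (fun _ => (1 : ℝ)) = p_o := by
  ext i
  have row_term : ∀ s, (∑ j, if 0 < sigProb π p_o s then
      sigProb π p_o s * posterior π p_o s i * posterior π p_o s j else 0) = π s i * p_o i := by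
    intro s
    rw [← ite_sigProb_mul_posterior hπnn hp s i]
    split_ifs with hs
    · rw [← Finset.mul_sum, sum_posterior hs, mul_one]
    · exact Finset.sum_const_zero
  simp only [mulVec, dotProduct, XiPi, of_apply, mul_one]
  rw [Finset.sum_comm, Finset.sum_congr rfl fun s _ => row_term s, ← Finset.sum_mul, hπsum i,
    one_mul]

end Signaling

theorem XiPi_completelyPositive_and_rowsum_general {n k : ℕ}
    (p_o : Fin n → ℝ) (hpos : ∀ j, 0 < p_o j)
    (π : Fin k → Fin n → ℝ) (hπnn : ∀ s j, 0 ≤ π s j) (hπsum : ∀ j, ∑ s, π s j = 1) :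
    IsCompletelyPositive (XiPi π p_o) ∧
      (XiPi π p_o).mulVec (fun _ => (1 : ℝ)) = p_o :=
  have hp : ∀ j, 0 ≤ p_o j := fun j => (hpos j).le
  ⟨isCompletelyPositive_XiPi hπnn hp, XiPi_mulVec_one hπnn hp hπsum⟩

/-- For every signaling rule `π` with `k` signals, the posterior-correlation matrix `Ξ_π`
is completely positive and its rows sum to the prior: `Ξ_π 𝟙 = p_o`. -/
theorem XiPi_completelyPositive_and_rowsum {n k : ℕ}
    (p_o : Fin n → ℝ) (hpos : ∀ j, 0 < p_o j) (hsum : ∑ j, p_o j = 1)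
    (π : Fin k → Fin n → ℝ) (hπnn : ∀ s j, 0 ≤ π s j) (hπsum : ∀ j, ∑ s, π s j = 1) :
    IsCompletelyPositive (XiPi π p_o) ∧
      (XiPi π p_o).mulVec (fun _ => (1 : ℝ)) = p_o :=
  XiPi_completelyPositive_and_rowsum_general p_o hpos π hπnn hπsum
end

section
/- Let Ξ ∈ ℝ^{n×n} be completely positive with Ξ 𝟙 = p_o, and let Ξ = Σ_{i=1}^k b_i b_iᵀ with b_i ∈ ℝ^n entrywise nonnegative and b_i ≠ 0 for all i. Then π defined by π(s_i|z_j) = (b_iᵀ𝟙) · b_{i,j} / p_o(j) is a valid signaling rule with k signals (i.e., π(s_i|z_j) ≥ 0 and Σ_{i=1}^k π(s_i|z_j) = 1 for every j), and its posterior-correlation matrix satisfies Ξ_π = Ξ. -/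
open Matrix BigOperators

/-- The signaling rule `π(s_i|z_j) = (b_iᵀ𝟙) b_{i,j} / p_o(j)` built from a
completely positive factorization `Ξ = ∑ i, b_i b_iᵀ`. -/
noncomputable def ruleOf {n k : ℕ} (b : Fin k → Fin n → ℝ) (p_o : Fin n → ℝ) :
    Fin k → Fin n → ℝ :=
  fun i j => (∑ r, b i r) * b i j / p_o j

/-!
Writing `S_i = ∑ r, b_{i,r}`, the prior weights cancel: signal `i` has probability `S_i²` and
posterior `b_i / S_i`, so its contribution `p(s_i) p_{s_i} p_{s_i}ᵀ` to `Ξ_π` is exactly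
`b_i b_iᵀ`. Summing `π(s_i|z_j)` over `i` gives `(Ξ 𝟙)_j / p_o(j) = 1`.
-/

namespace ruleOf

variable {n k : ℕ} {b : Fin k → Fin n → ℝ} {p_o : Fin n → ℝ}

theorem nonneg (hp : ∀ j, 0 ≤ p_o j) (hb : ∀ i j, 0 ≤ b i j) (i : Fin k) (j : Fin n) :
    0 ≤ ruleOf b p_o i j :=
  div_nonneg (mul_nonneg (Finset.sum_nonneg fun r _ => hb i r) (hb i j)) (hp j)

theorem sum_apply (j : Fin n) :
    ∑ i, ruleOf b p_o i j = (∑ i, (∑ r, b i r) * b i j) / p_o j :=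
  (Finset.sum_div _ _ _).symm

theorem sigProb_eq (hp : ∀ j, p_o j ≠ 0) (s : Fin k) :
    sigProb (ruleOf b p_o) p_o s = (∑ r, b s r) ^ 2 := by
  simp only [sigProb, ruleOf, div_mul_cancel₀ _ (hp _), ← Finset.mul_sum, sq]

theorem posterior_eq (hp : ∀ j, p_o j ≠ 0) (s : Fin k) (j : Fin n) :
    posterior (ruleOf b p_o) p_o s j = b s j / ∑ r, b s r := by
  rw [posterior, sigProb_eq hp, ruleOf, div_mul_cancel₀ _ (hp j), sq]
  rcases eq_or_ne (∑ r, b s r) 0 with h | h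
  · simp [h]
  · exact mul_div_mul_left _ _ h

theorem XiPi_eq (hp : ∀ j, p_o j ≠ 0) (hb : ∀ s, ∑ r, b s r ≠ 0) :
    XiPi (ruleOf b p_o) p_o = Matrix.of fun i j => ∑ s, b s i * b s j := by
  ext i j
  simp only [XiPi, of_apply]
  refine Finset.sum_congr rfl fun s _ => ?_
  rw [sigProb_eq hp, posterior_eq hp, posterior_eq hp, if_pos (pow_two_pos_of_ne_zero (hb s))]
  field_simp [hb s]

end ruleOf

theorem Matrix.mulVec_one_eq_sum_of_eq_sum_mul {m ι R : Type*} [Fintype m] [Fintype ι]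
    [CommSemiring R] {Ξ : Matrix m m R} {b : ι → m → R}
    (hdec : ∀ r c, Ξ r c = ∑ i, b i r * b i c) (j : m) :
    Ξ.mulVec (fun _ => 1) j = ∑ i, (∑ r, b i r) * b i j := by
  simp only [mulVec, dotProduct, mul_one, hdec, Finset.sum_mul]
  rw [Finset.sum_comm]
  simp_rw [mul_comm]

theorem ruleOf_valid_and_XiPi_eq_general {n k : ℕ}
    (p_o : Fin n → ℝ) (hpos : ∀ j, 0 < p_o j)
    (Ξ : Matrix (Fin n) (Fin n) ℝ)
    (hrow : Ξ.mulVec (fun _ => (1 : ℝ)) = p_o)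
    (b : Fin k → Fin n → ℝ) (hbnn : ∀ i j, 0 ≤ b i j) (hbne : ∀ i, b i ≠ 0)
    (hdec : ∀ r c, Ξ r c = ∑ i, b i r * b i c) :
    (∀ i j, 0 ≤ ruleOf b p_o i j) ∧
      (∀ j, ∑ i, ruleOf b p_o i j = 1) ∧
      XiPi (ruleOf b p_o) p_o = Ξ := by
  have hp : ∀ j, p_o j ≠ 0 := fun j => (hpos j).ne'
  have hS : ∀ i, ∑ r, b i r ≠ 0 := fun i =>
    (Fintype.sum_pos (lt_of_le_of_ne (hbnn i) (hbne i).symm)).ne'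
  refine ⟨ruleOf.nonneg (fun j => (hpos j).le) hbnn, fun j => ?_, ?_⟩
  · rw [ruleOf.sum_apply, ← mulVec_one_eq_sum_of_eq_sum_mul hdec, hrow, div_self (hp j)]
  · rw [ruleOf.XiPi_eq hp hS]
    exact Matrix.ext fun r c => (hdec r c).symm

/-- If `Ξ` is completely positive with `Ξ 𝟙 = p_o` and `Ξ = ∑ i, b_i b_iᵀ` with the `b_i`
entrywise nonnegative and nonzero, then `π(s_i|z_j) = (b_iᵀ𝟙) b_{i,j} / p_o(j)` is a
valid signaling rule with `k` signals whose posterior-correlation matrix equals `Ξ`. -/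
theorem ruleOf_valid_and_XiPi_eq {n k : ℕ}
    (p_o : Fin n → ℝ) (hpos : ∀ j, 0 < p_o j) (hsum : ∑ j, p_o j = 1)
    (Ξ : Matrix (Fin n) (Fin n) ℝ)
    (hCP : IsCompletelyPositive Ξ)
    (hrow : Ξ.mulVec (fun _ => (1 : ℝ)) = p_o)
    (b : Fin k → Fin n → ℝ) (hbnn : ∀ i j, 0 ≤ b i j) (hbne : ∀ i, b i ≠ 0)
    (hdec : ∀ r c, Ξ r c = ∑ i, b i r * b i c) :
    (∀ i j, 0 ≤ ruleOf b p_o i j) ∧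
      (∀ j, ∑ i, ruleOf b p_o i j = 1) ∧
      XiPi (ruleOf b p_o) p_o = Ξ :=
  ruleOf_valid_and_XiPi_eq_general p_o hpos Ξ hrow b hbnn hbne hdec
end

section
/- Strong duality holds between the primal completely positive program and its copositive dual: for every symmetric V̄ ∈ ℝ^{n×n}, the infimum of tr(Ξ V̄) over all completely positive Ξ with Ξ 𝟙 = p_o equals the supremum of p_oᵀ y over all y ∈ ℝ^n for which the symmetric matrix V̄ − (1/2)(𝟙 yᵀ + y 𝟙ᵀ) is copositive. -/
/-!
Write `f q = qᵀ V̄ q`, `Δ` for the standard simplex and `K` for the convex hull of the graph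
of `f` over `Δ`, a compact set by Carathéodory. Writing a completely positive `Ξ` as
`∑ₗ bₗ bₗᵀ` with `bₗ = Tₗ qₗ`, `qₗ ∈ Δ`, gives `Ξ 𝟙 = ∑ₗ Tₗ² qₗ` and `tr(Ξ V̄) = ∑ₗ Tₗ² f(qₗ)`;
hence, as `𝟙ᵀ p_o = 1`, the primal values are exactly the heights `t` with `(p_o, t) ∈ K`.
The quadratic form of `V̄ − ½(𝟙yᵀ + y𝟙ᵀ)` at `b = T q` is `T² (f q − yᵀq)`, so `y` is dual
feasible iff the linear function `y` lies below `f` on `Δ`. Weak duality: the half-space above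
the graph of `y` contains `K`. Strong duality: for `t` below the primal optimum, separate
`(p_o, t)` from `K`; on the hyperplane `𝟙ᵀq = 1` the separating affine functional is linear,
which yields a dual feasible `y` with `p_oᵀ y > t`.
-/

open Matrix BigOperators

/-- A real symmetric matrix `S` (indexed by `Fin n`) is copositive if
`bᵀ S b ≥ 0` for every entrywise-nonnegative `b ∈ ℝ^n`. -/
def IsCopositive {n : ℕ} (S : Matrix (Fin n) (Fin n) ℝ) : Prop :=
  ∀ b : Fin n → ℝ, (∀ i, 0 ≤ b i) → 0 ≤ b ⬝ᵥ S.mulVec b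

open Set

theorem exists_fin_le_finrank_succ_of_mem_convexHull {E : Type*} [AddCommGroup E] [Module ℝ E]
    [FiniteDimensional ℝ E] {s : Set E} {x : E} (hx : x ∈ convexHull ℝ s) :
    ∃ k ≤ Module.finrank ℝ E + 1, ∃ w ∈ stdSimplex ℝ (Fin k), ∃ z : Fin k → E,
      (∀ i, z i ∈ s) ∧ ∑ i, w i • z i = x := by
  obtain ⟨ι, _, z, w, hzs, hind, hw0, hw1, rfl⟩ := eq_pos_convex_span_of_mem_convexHull hx
  have hcard : Fintype.card ι ≤ Module.finrank ℝ E + 1 :=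
    hind.card_le_finrank_succ.trans (by gcongr; exact Submodule.finrank_le _)
  let e := Fintype.equivFin ι
  refine ⟨_, hcard, w ∘ e.symm, ⟨fun i => (hw0 _).le, ?_⟩, z ∘ e.symm, fun i => hzs ⟨_, rfl⟩, ?_⟩
  · rw [← hw1]; exact e.symm.sum_comp w
  · exact e.symm.sum_comp fun i => w i • z i

theorem IsCompact.convexHull {E : Type*} [NormedAddCommGroup E] [NormedSpace ℝ E]
    [FiniteDimensional ℝ E] {s : Set E} (hs : IsCompact s) : IsCompact (convexHull ℝ s) := by
  let Φ : (k : ℕ) → (Fin k → ℝ) × (Fin k → E) → E := fun k p => ∑ i, p.1 i • p.2 i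
  have hΦ : _root_.convexHull ℝ s = ⋃ k ∈ Finset.range (Module.finrank ℝ E + 2),
      Φ k '' (stdSimplex ℝ (Fin k) ×ˢ univ.pi fun _ => s) := by
    refine Subset.antisymm (fun x hx => ?_) ?_
    · obtain ⟨k, hk, w, hw, z, hz, rfl⟩ := exists_fin_le_finrank_succ_of_mem_convexHull hx
      exact mem_biUnion (Finset.mem_range.2 (by omega)) ⟨(w, z), ⟨hw, fun i _ => hz i⟩, rfl⟩
    · refine iUnion₂_subset fun k _ => ?_
      rintro _ ⟨⟨w, z⟩, ⟨hw, hz⟩, rfl⟩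
      exact (convex_convexHull ℝ s).sum_mem (fun i _ => hw.1 i) hw.2
        fun i _ => subset_convexHull ℝ s (hz i (mem_univ i))
  rw [hΦ]
  exact (Finset.range _).isCompact_biUnion fun k _ =>
    ((isCompact_stdSimplex ℝ _).prod (isCompact_univ_pi fun _ => hs)).image (by fun_prop)

variable {ι : Type*} [Fintype ι]

theorem ContinuousLinearMap.apply_prod_eq_dotProduct_add [DecidableEq ι]
    (φ : (ι → ℝ) × ℝ →L[ℝ] ℝ) (q : ι → ℝ) (r : ℝ) :
    φ (q, r) = (fun i => φ (Pi.single i 1, 0)) ⬝ᵥ q + r * φ (0, 1) := by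
  have hq : ((q, 0) : (ι → ℝ) × ℝ) = ∑ i, q i • (Pi.single i 1, 0) := by
    ext <;> simp [Prod.fst_sum, Prod.snd_sum, Finset.sum_apply, Pi.single_apply]
  have hsplit : ((q, r) : (ι → ℝ) × ℝ) = (q, 0) + r • (0, 1) := by ext <;> simp
  rw [hsplit, map_add, hq, map_sum, map_smul]
  simp only [map_smul, smul_eq_mul, dotProduct, mul_comm]

theorem dotProduct_le_of_mem_convexHull_graphOn {s : Set (ι → ℝ)}
    {f : (ι → ℝ) → ℝ} {y p : ι → ℝ} {t : ℝ} (hy : ∀ q ∈ s, y ⬝ᵥ q ≤ f q)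
    (h : (p, t) ∈ convexHull ℝ (s.graphOn f)) : y ⬝ᵥ p ≤ t := by
  have hconv : Convex ℝ {z : (ι → ℝ) × ℝ | y ⬝ᵥ z.1 - z.2 ≤ 0} :=
    convex_halfSpace_le
      ⟨fun a b => by simp only [Prod.fst_add, dotProduct_add, Prod.snd_add]; ring,
        fun c a => by simp only [Prod.smul_fst, dotProduct_smul, smul_eq_mul, Prod.smul_snd]; ring⟩
      0
  have hsub : s.graphOn f ⊆ {z | y ⬝ᵥ z.1 - z.2 ≤ 0} := by
    rintro _ ⟨q, hq, rfl⟩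
    simpa using hy q hq
  simpa using convexHull_min hsub hconv h

theorem IsClosed.exists_dotProduct_lt_of_notMem {K : Set ((ι → ℝ) × ℝ)} (hKc : Convex ℝ K)
    (hK : IsClosed K) {p : ι → ℝ}
    (hp : ∑ i, p i = 1) {t t' : ℝ} (ht : (p, t) ∉ K) (ht' : (p, t') ∈ K) (htt' : t < t') :
    ∃ y : ι → ℝ, t < y ⬝ᵥ p ∧ ∀ z ∈ K, ∑ i, z.1 i = 1 → y ⬝ᵥ z.1 < z.2 := by
  classical
  obtain ⟨φ, u, hφp, hφK⟩ := geometric_hahn_banach_point_closed hKc hK ht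
  set a : ι → ℝ := fun i => φ (Pi.single i 1, 0)
  set s := φ (0, 1)
  have hφ : ∀ q r, φ (q, r) = a ⬝ᵥ q + r * s := φ.apply_prod_eq_dotProduct_add
  have hs : 0 < s := by
    have := hφK _ ht'
    rw [hφ] at this hφp
    nlinarith
  -- The affine functional `q ↦ (u - a ⬝ᵥ q) / s` is linear on the hyperplane `∑ i, q i = 1`.
  have hy : ∀ q : ι → ℝ, ∑ i, q i = 1 → (s⁻¹ • (u • 1 - a)) ⬝ᵥ q = (u - a ⬝ᵥ q) / s := by
    intro q hq
    rw [smul_dotProduct, sub_dotProduct, smul_dotProduct, one_dotProduct, hq]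
    simp [div_eq_inv_mul]
  refine ⟨s⁻¹ • (u • 1 - a), ?_, fun z hz hz1 => ?_⟩
  · rw [hy p hp, lt_div_iff₀ hs]
    rw [hφ] at hφp
    linarith
  · rw [hy _ hz1, div_lt_iff₀ hs]
    have := hφK z hz
    rw [← Prod.mk.eta (p := z), hφ] at this
    linarith

theorem sInf_convexHull_graphOn_stdSimplex_eq_sSup {f : (ι → ℝ) → ℝ}
    (hf : ContinuousOn f (stdSimplex ℝ ι)) {p : ι → ℝ} (hp : p ∈ stdSimplex ℝ ι) :
    sInf {t | (p, t) ∈ convexHull ℝ ((stdSimplex ℝ ι).graphOn f)} =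
      sSup {c | ∃ y : ι → ℝ, (∀ q ∈ stdSimplex ℝ ι, y ⬝ᵥ q ≤ f q) ∧ c = p ⬝ᵥ y} := by
  set K := convexHull ℝ ((stdSimplex ℝ ι).graphOn f)
  set P := {t | (p, t) ∈ K}
  set D := {c | ∃ y : ι → ℝ, (∀ q ∈ stdSimplex ℝ ι, y ⬝ᵥ q ≤ f q) ∧ c = p ⬝ᵥ y}
  have hK : IsCompact K :=
    ((isCompact_stdSimplex ℝ ι).image_of_continuousOn (continuousOn_id.prodMk hf)).convexHull
  have weak : ∀ c ∈ D, ∀ t ∈ P, c ≤ t := by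
    rintro _ ⟨y, hy, rfl⟩ t ht
    rw [dotProduct_comm]
    exact dotProduct_le_of_mem_convexHull_graphOn hy ht
  have hfp : f p ∈ P := subset_convexHull ℝ _ ⟨p, hp, rfl⟩
  obtain ⟨m, hm⟩ := (isCompact_stdSimplex ℝ ι).bddBelow_image hf
  have hmD : m ∈ D := by
    refine ⟨m • 1, fun q hq => ?_, ?_⟩
    · rw [smul_dotProduct, one_dotProduct, hq.2, smul_eq_mul, mul_one]
      exact hm ⟨q, hq, rfl⟩
    · rw [dotProduct_smul, dotProduct_one, hp.2, smul_eq_mul, mul_one]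
  have hbdd : BddBelow P := ⟨m, weak m hmD⟩
  refine le_antisymm (le_of_forall_lt fun t ht => ?_)
    (csSup_le ⟨m, hmD⟩ fun c hc => le_csInf ⟨f p, hfp⟩ (weak c hc))
  have htK : (p, t) ∉ K := fun h => (csInf_le hbdd h).not_gt ht
  obtain ⟨y, hty, hy⟩ := hK.isClosed.exists_dotProduct_lt_of_notMem (convex_convexHull ℝ _)
    hp.2 htK hfp (ht.trans_le (csInf_le hbdd hfp))
  have hyD : p ⬝ᵥ y ∈ D :=
    ⟨y, fun q hq => (hy _ (subset_convexHull ℝ _ ⟨q, hq, rfl⟩) hq.2).le, rfl⟩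
  calc t < y ⬝ᵥ p := hty
    _ = p ⬝ᵥ y := dotProduct_comm ..
    _ ≤ sSup D := le_csSup ⟨f p, fun c hc => weak c hc _ hfp⟩ hyD

theorem exists_mem_stdSimplex_smul_eq [Nonempty ι] {b : ι → ℝ} (hb : ∀ i, 0 ≤ b i) :
    ∃ T : ℝ, ∃ q ∈ stdSimplex ℝ ι, T • q = b := by
  classical
  by_cases hT : ∑ i, b i = 0
  · have hb0 : b = 0 := funext fun i => (Finset.sum_eq_zero_iff_of_nonneg fun i _ => hb i).1 hT i
      (Finset.mem_univ i)
    exact ⟨0, _, single_mem_stdSimplex ℝ (Classical.arbitrary ι), by rw [zero_smul, hb0]⟩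
  · refine ⟨∑ i, b i, (∑ i, b i)⁻¹ • b, ⟨fun i => ?_, ?_⟩, smul_inv_smul₀ hT b⟩
    · exact mul_nonneg (inv_nonneg.2 (Finset.sum_nonneg fun i _ => hb i)) (hb i)
    · simp only [Pi.smul_apply, smul_eq_mul, ← Finset.mul_sum, inv_mul_cancel₀ hT]

theorem dotProduct_mulVec_sub_half_vecMulVec (V : Matrix ι ι ℝ) (y b : ι → ℝ) :
    b ⬝ᵥ (V - (1/2 : ℝ) • (vecMulVec (fun _ => 1) y + vecMulVec y (fun _ => 1))) *ᵥ b =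
      b ⬝ᵥ V *ᵥ b - (∑ i, b i) * (y ⬝ᵥ b) := by
  have hone : (fun _ => 1 : ι → ℝ) = 1 := rfl
  simp only [hone, sub_mulVec, add_mulVec, smul_mulVec, vecMulVec_mulVec, op_smul_eq_smul,
    dotProduct_sub, dotProduct_smul, dotProduct_add, dotProduct_one, one_dotProduct, smul_eq_mul,
    dotProduct_comm b y]
  ring

theorem isCopositive_sub_half_vecMulVec_iff {n : ℕ} (V : Matrix (Fin n) (Fin n) ℝ)
    (y : Fin n → ℝ) :
    IsCopositive (V - (1/2 : ℝ) • (vecMulVec (fun _ => 1) y + vecMulVec y (fun _ => 1))) ↔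
      ∀ q ∈ stdSimplex ℝ (Fin n), y ⬝ᵥ q ≤ q ⬝ᵥ V *ᵥ q := by
  refine ⟨fun h q hq => ?_, fun h b hb => ?_⟩
  · have := h q hq.1
    rw [dotProduct_mulVec_sub_half_vecMulVec, hq.2, one_mul] at this
    linarith
  · cases isEmpty_or_nonempty (Fin n)
    · simp [dotProduct]
    obtain ⟨T, q, hq, rfl⟩ := exists_mem_stdSimplex_smul_eq hb
    rw [dotProduct_mulVec_sub_half_vecMulVec]
    simp only [mulVec_smul, smul_dotProduct, dotProduct_smul, Pi.smul_apply, smul_eq_mul,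
      ← Finset.mul_sum, hq.2]
    nlinarith [h q hq, sq_nonneg T]

theorem Matrix.mul_transpose_self_eq_sum_vecMulVec {m k R : Type*} [Fintype k] [CommSemiring R]
    (B : Matrix m k R) : B * Bᵀ = ∑ l, vecMulVec (Bᵀ l) (Bᵀ l) := by
  ext i j
  simp [mul_apply, Matrix.sum_apply, vecMulVec_apply]

theorem isCompletelyPositive_iff_exists_sum_vecMulVec {n : ℕ} {Ξ : Matrix (Fin n) (Fin n) ℝ} :
    IsCompletelyPositive Ξ ↔ ∃ (k : ℕ) (b : Fin k → Fin n → ℝ), (∀ l i, 0 ≤ b l i) ∧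
      Ξ = ∑ l, vecMulVec (b l) (b l) := by
  constructor
  · rintro ⟨k, B, hB, rfl⟩
    exact ⟨k, Bᵀ, fun l i => hB i l, B.mul_transpose_self_eq_sum_vecMulVec⟩
  · rintro ⟨k, b, hb, rfl⟩
    exact ⟨k, of fun i l => b l i, fun i l => hb l i,
      (mul_transpose_self_eq_sum_vecMulVec _).symm⟩

theorem isCompletelyPositive_sum_vecMulVec {n : ℕ} {κ : Type*} [Fintype κ] (b : κ → Fin n → ℝ)
    (hb : ∀ l i, 0 ≤ b l i) : IsCompletelyPositive (∑ l, vecMulVec (b l) (b l)) :=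
  let e := Fintype.equivFin κ
  isCompletelyPositive_iff_exists_sum_vecMulVec.2
    ⟨_, b ∘ e.symm, fun _ => hb _, (e.symm.sum_comp fun l => vecMulVec (b l) (b l)).symm⟩

def rowSumsAndTrace (V : Matrix ι ι ℝ) : Matrix ι ι ℝ →ₗ[ℝ] (ι → ℝ) × ℝ where
  toFun Ξ := (Ξ *ᵥ 1, trace (Ξ * V))
  map_add' Ξ Ξ' := by simp [add_mulVec, add_mul]
  map_smul' c Ξ := by simp [smul_mulVec]

theorem rowSumsAndTrace_vecMulVec_of_mem_stdSimplex (V : Matrix ι ι ℝ) {q : ι → ℝ}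
    (hq : q ∈ stdSimplex ℝ ι) :
    rowSumsAndTrace V (vecMulVec q q) = (q, q ⬝ᵥ V *ᵥ q) := by
  simp only [rowSumsAndTrace, LinearMap.coe_mk, AddHom.coe_mk, vecMulVec_mulVec, dotProduct_one,
    hq.2, MulOpposite.op_one, one_smul, vecMulVec_mul, trace_vecMulVec]
  rw [dotProduct_mulVec, dotProduct_comm]

theorem rowSumsAndTrace_vecMulVec_smul_of_mem_stdSimplex (V : Matrix ι ι ℝ) (T : ℝ) {q : ι → ℝ}
    (hq : q ∈ stdSimplex ℝ ι) :
    rowSumsAndTrace V (vecMulVec (T • q) (T • q)) = (T * T) • (q, q ⬝ᵥ V *ᵥ q) := by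
  rw [smul_vecMulVec, vecMulVec_smul, smul_smul, map_smul,
    rowSumsAndTrace_vecMulVec_of_mem_stdSimplex V hq]

theorem IsCompletelyPositive.rowSumsAndTrace_mem_convexHull {n : ℕ}
    {Ξ : Matrix (Fin n) (Fin n) ℝ} (hΞ : IsCompletelyPositive Ξ) (h1 : ∑ i, (Ξ *ᵥ 1) i = 1)
    (V : Matrix (Fin n) (Fin n) ℝ) :
    rowSumsAndTrace V Ξ ∈ convexHull ℝ ((stdSimplex ℝ (Fin n)).graphOn fun q => q ⬝ᵥ V *ᵥ q) := by
  have : Nonempty (Fin n) := by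
    by_contra h
    simp [not_nonempty_iff.1 h] at h1
  obtain ⟨k, b, hb, rfl⟩ := isCompletelyPositive_iff_exists_sum_vecMulVec.1 hΞ
  choose T q hq hbq using fun l => exists_mem_stdSimplex_smul_eq (hb l)
  obtain rfl : (fun l => T l • q l) = b := funext hbq
  have hdecomp : rowSumsAndTrace V (∑ l, vecMulVec (T l • q l) (T l • q l)) =
      ∑ l, (T l * T l) • (q l, q l ⬝ᵥ V *ᵥ q l) := by
    simp only [map_sum, rowSumsAndTrace_vecMulVec_smul_of_mem_stdSimplex V _ (hq _)]
  have hw : ∑ l, T l * T l = 1 := by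
    have := congrArg (fun x => ∑ i, x.1 i) hdecomp
    simp only [Prod.fst_sum, Prod.smul_fst, Finset.sum_apply, Pi.smul_apply, smul_eq_mul] at this
    rw [Finset.sum_comm] at this
    simp only [← Finset.mul_sum, (hq _).2, mul_one] at this
    rw [← this]
    exact h1
  rw [hdecomp]
  exact (convex_convexHull ℝ _).sum_mem (fun l _ => mul_self_nonneg _) hw
    fun l _ => subset_convexHull ℝ _ ⟨q l, hq l, rfl⟩

theorem exists_isCompletelyPositive_rowSumsAndTrace_eq {n : ℕ} {V : Matrix (Fin n) (Fin n) ℝ}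
    {x : (Fin n → ℝ) × ℝ}
    (hx : x ∈ convexHull ℝ ((stdSimplex ℝ (Fin n)).graphOn fun q => q ⬝ᵥ V *ᵥ q)) :
    ∃ Ξ, IsCompletelyPositive Ξ ∧ rowSumsAndTrace V Ξ = x := by
  obtain ⟨κ, _, w, z, hw0, -, hz, rfl⟩ := mem_convexHull_iff_exists_fintype.1 hx
  choose q hq hqz using hz
  refine ⟨∑ j, vecMulVec (√(w j) • q j) (√(w j) • q j),
    isCompletelyPositive_sum_vecMulVec _ fun j i => mul_nonneg (Real.sqrt_nonneg _) ((hq j).1 i),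
    ?_⟩
  simp only [map_sum, rowSumsAndTrace_vecMulVec_smul_of_mem_stdSimplex V _ (hq _),
    Real.mul_self_sqrt (hw0 _), hqz]

theorem exists_isCompletelyPositive_iff_mem_convexHull {n : ℕ} {p : Fin n → ℝ}
    (hp : ∑ i, p i = 1) (V : Matrix (Fin n) (Fin n) ℝ) (c : ℝ) :
    (∃ Ξ, IsCompletelyPositive Ξ ∧ Ξ *ᵥ (fun _ => 1) = p ∧ c = trace (Ξ * V)) ↔
      (p, c) ∈ convexHull ℝ ((stdSimplex ℝ (Fin n)).graphOn fun q => q ⬝ᵥ V *ᵥ q) := by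
  constructor
  · rintro ⟨Ξ, hΞ, rfl, rfl⟩
    exact hΞ.rowSumsAndTrace_mem_convexHull hp V
  · intro h
    obtain ⟨Ξ, hΞ, hx⟩ := exists_isCompletelyPositive_rowSumsAndTrace_eq h
    exact ⟨Ξ, hΞ, congrArg Prod.fst hx, (congrArg Prod.snd hx).symm⟩

theorem cp_strong_duality_general {n : ℕ}
    (p_o : Fin n → ℝ) (hpos : ∀ j, 0 < p_o j) (hsum : ∑ j, p_o j = 1)
    (Vbar : Matrix (Fin n) (Fin n) ℝ) :
    sInf {c : ℝ | ∃ Ξ : Matrix (Fin n) (Fin n) ℝ,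
        IsCompletelyPositive Ξ ∧ Ξ.mulVec (fun _ => (1 : ℝ)) = p_o ∧
        c = Matrix.trace (Ξ * Vbar)} =
      sSup {c : ℝ | ∃ y : Fin n → ℝ,
        IsCopositive (Vbar - (1/2 : ℝ) •
          (Matrix.vecMulVec (fun _ => (1 : ℝ)) y + Matrix.vecMulVec y (fun _ => (1 : ℝ)))) ∧
        c = p_o ⬝ᵥ y} := by
  have hp : p_o ∈ stdSimplex ℝ (Fin n) := ⟨fun j => (hpos j).le, hsum⟩
  have hf : Continuous fun q : Fin n → ℝ => q ⬝ᵥ Vbar *ᵥ q :=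
    continuous_id.dotProduct (continuous_const.matrix_mulVec continuous_id)
  simp_rw [exists_isCompletelyPositive_iff_mem_convexHull hsum, isCopositive_sub_half_vecMulVec_iff]
  exact sInf_convexHull_graphOn_stdSimplex_eq_sSup hf.continuousOn hp

/-- Strong duality between the primal completely positive program and its copositive
dual: the infimum of `tr(Ξ V̄)` over completely positive `Ξ` with `Ξ 𝟙 = p_o` equals
the supremum of `p_oᵀ y` over `y` such that `V̄ − (1/2)(𝟙 yᵀ + y 𝟙ᵀ)` is copositive. -/
theorem cp_strong_duality {n : ℕ}
    (p_o : Fin n → ℝ) (hpos : ∀ j, 0 < p_o j) (hsum : ∑ j, p_o j = 1)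
    (Vbar : Matrix (Fin n) (Fin n) ℝ) (hV : Vbar.IsSymm) :
    sInf {c : ℝ | ∃ Ξ : Matrix (Fin n) (Fin n) ℝ,
        IsCompletelyPositive Ξ ∧ Ξ.mulVec (fun _ => (1 : ℝ)) = p_o ∧
        c = Matrix.trace (Ξ * Vbar)} =
      sSup {c : ℝ | ∃ y : Fin n → ℝ,
        IsCopositive (Vbar - (1/2 : ℝ) •
          (Matrix.vecMulVec (fun _ => (1 : ℝ)) y + Matrix.vecMulVec y (fun _ => (1 : ℝ)))) ∧
        c = p_o ⬝ᵥ y} :=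
  cp_strong_duality_general p_o hpos hsum Vbar
end

section
/- For every λ ∈ (0,1), the matrix Ξ_λ := (1−λ) p_o p_oᵀ + λ diag(p_o) satisfies Ξ_λ 𝟙 = p_o and lies in the interior of the set of completely positive n×n matrices, where the interior is taken in the topological subspace of symmetric n×n real matrices. -/
/-!
Write `Ξ_λ = (1 - λ)² p pᵀ + λ ((1 - λ) p pᵀ + diag p)`. The first summand is completely
positive; since `∑ p = 1`, the second has positive entries and is strictly diagonally dominant,
and both properties survive small symmetric perturbations. A symmetric, nonnegative, diagonally
dominant matrix is completely positive, being a nonnegative combination of the matrices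
`eᵢ eᵢᵀ` and `(eₖ + eₗ)(eₖ + eₗ)ᵀ`.
-/

open Matrix BigOperators

/-- The mixture of null signaling and full disclosure:
`Ξ_λ = (1 − λ) p_o p_oᵀ + λ diag(p_o)`. -/
noncomputable def XiLam {n : ℕ} (p_o : Fin n → ℝ) (lam : ℝ) : Matrix (Fin n) (Fin n) ℝ :=
  (1 - lam) • Matrix.vecMulVec p_o p_o + lam • Matrix.diagonal p_o

namespace IsCompletelyPositive

variable {n : ℕ}

theorem zero : IsCompletelyPositive (0 : Matrix (Fin n) (Fin n) ℝ) :=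
  ⟨0, 0, fun _ _ => le_rfl, by simp⟩

theorem add {A B : Matrix (Fin n) (Fin n) ℝ} (hA : IsCompletelyPositive A)
    (hB : IsCompletelyPositive B) : IsCompletelyPositive (A + B) := by
  obtain ⟨k₁, B₁, hB₁, rfl⟩ := hA
  obtain ⟨k₂, B₂, hB₂, rfl⟩ := hB
  refine ⟨k₁ + k₂, of fun i => Fin.append (B₁ i) (B₂ i), fun i j => ?_, ?_⟩
  · refine Fin.addCases (fun j => ?_) (fun j => ?_) j
    · simpa using hB₁ i j
    · simpa using hB₂ i j
  · ext i j
    simp [mul_apply, Fin.sum_univ_add]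

theorem sum {ι : Type*} (s : Finset ι) {A : ι → Matrix (Fin n) (Fin n) ℝ}
    (hA : ∀ i ∈ s, IsCompletelyPositive (A i)) : IsCompletelyPositive (∑ i ∈ s, A i) :=
  Finset.sum_induction A _ (fun _ _ => add) zero hA

theorem smul {A : Matrix (Fin n) (Fin n) ℝ} (hA : IsCompletelyPositive A) {t : ℝ} (ht : 0 ≤ t) :
    IsCompletelyPositive (t • A) := by
  obtain ⟨k, B, hB, rfl⟩ := hA
  refine ⟨k, √t • B, fun i j => mul_nonneg (Real.sqrt_nonneg t) (hB i j), ?_⟩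
  rw [transpose_smul, smul_mul, Matrix.mul_smul, smul_smul, Real.mul_self_sqrt ht]

end IsCompletelyPositive

section CompletelyPositive

variable {n : ℕ}

theorem isCompletelyPositive_vecMulVec {x : Fin n → ℝ} (hx : 0 ≤ x) :
    IsCompletelyPositive (vecMulVec x x) :=
  ⟨1, replicateCol (Fin 1) x, fun i _ => hx i, by
    rw [transpose_replicateCol]; exact vecMulVec_eq (Fin 1) x x⟩

theorem isCompletelyPositive_diagonal {d : Fin n → ℝ} (hd : 0 ≤ d) :
    IsCompletelyPositive (diagonal d) := by
  refine ⟨n, diagonal fun i => √(d i), fun i j => ?_, ?_⟩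
  · by_cases h : i = j <;> simp [h]
  · rw [diagonal_transpose, diagonal_mul_diagonal]
    congr
    funext i
    exact (Real.mul_self_sqrt (hd i)).symm

theorem diagonal_sum_add_eq_sum_vecMulVec {N : Matrix (Fin n) (Fin n) ℝ} (hN : N.IsSymm) :
    diagonal (fun i => ∑ j, N i j) + N = ∑ k, ∑ l, (N k l / 2) •
      vecMulVec (Pi.single k 1 + Pi.single l 1) (Pi.single k 1 + Pi.single l 1) := by
  ext i j
  simp only [Matrix.add_apply, Matrix.sum_apply, Matrix.smul_apply, vecMulVec_apply,
    Pi.add_apply, mul_add, smul_eq_mul, Finset.sum_add_distrib, Pi.single_apply, mul_ite,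
    mul_one, mul_zero]
  rcases eq_or_ne i j with rfl | hij
  · simp [hN.apply i, Finset.sum_add_distrib, ← Finset.sum_div]
    ring
  · simp [hij, hN.apply i j]

theorem isCompletelyPositive_diagonal_sum_add {N : Matrix (Fin n) (Fin n) ℝ} (hN : N.IsSymm)
    (hN₀ : ∀ i j, 0 ≤ N i j) :
    IsCompletelyPositive (diagonal (fun i => ∑ j, N i j) + N) := by
  have hsingle : ∀ k : Fin n, (0 : Fin n → ℝ) ≤ Pi.single k 1 :=
    fun k => Pi.single_nonneg.mpr zero_le_one
  rw [diagonal_sum_add_eq_sum_vecMulVec hN]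
  refine IsCompletelyPositive.sum _ fun k _ => IsCompletelyPositive.sum _ fun l _ => ?_
  exact (isCompletelyPositive_vecMulVec (add_nonneg (hsingle k) (hsingle l))).smul
    (div_nonneg (hN₀ k l) zero_le_two)

/-- For a nonnegative matrix, `∑ j, G i j ≤ 2 * G i i` is diagonal dominance of row `i`. -/
theorem isCompletelyPositive_of_diagDominant {G : Matrix (Fin n) (Fin n) ℝ} (hG : G.IsSymm)
    (hG₀ : ∀ i j, 0 ≤ G i j) (hdom : ∀ i, ∑ j, G i j ≤ 2 * G i i) :
    IsCompletelyPositive G := by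
  obtain ⟨N, hN⟩ : ∃ N, N = G - diagonal fun i => G i i := ⟨_, rfl⟩
  have hrow : (fun i => ∑ j, N i j) = fun i => ∑ j, G i j - G i i := by
    simp [hN, Finset.sum_sub_distrib, diagonal_apply]
  have hsplit : G = diagonal (fun i => 2 * G i i - ∑ j, G i j) +
      (diagonal (fun i => ∑ j, N i j) + N) := by
    rw [hrow, hN]
    ext i j
    rcases eq_or_ne i j with rfl | h
    · simp only [Matrix.add_apply, Matrix.sub_apply, diagonal_apply_eq]
      ring
    · simp [h]
  have hN₀ : ∀ i j, 0 ≤ N i j := by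
    intro i j
    rcases eq_or_ne i j with rfl | h
    · simp [hN]
    · simpa [hN, h] using hG₀ i j
  rw [hsplit]
  exact (isCompletelyPositive_diagonal fun i => sub_nonneg.mpr (hdom i)).add
    (isCompletelyPositive_diagonal_sum_add (hN ▸ hG.sub (isSymm_diagonal _)) hN₀)

end CompletelyPositive

/-- For positive entries, `∑ j, G i j < 2 * G i i` is strict diagonal dominance of row `i`. -/
def IsPosStrictDiagDominant {ι : Type*} [Fintype ι] (G : Matrix ι ι ℝ) : Prop :=
  (∀ i j, 0 < G i j) ∧ ∀ i, ∑ j, G i j < 2 * G i i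

theorem isOpen_setOf_isPosStrictDiagDominant {ι : Type*} [Fintype ι] :
    IsOpen {G : Matrix ι ι ℝ | IsPosStrictDiagDominant G} := by
  have hentry : ∀ i j, Continuous fun G : Matrix ι ι ℝ => G i j :=
    fun i j => (continuous_apply j).comp (continuous_apply i)
  simp only [IsPosStrictDiagDominant, Set.ofPred_and, Set.ofPred_forall]
  exact (isOpen_iInter_of_finite fun i => isOpen_iInter_of_finite fun j =>
      isOpen_lt continuous_const (hentry i j)).inter
    (isOpen_iInter_of_finite fun i =>
      isOpen_lt (continuous_finsetSum _ fun j _ => hentry i j)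
        (continuous_const.mul (hentry i i)))

theorem mem_interior_setOf_isCompletelyPositive {n : ℕ} {C : Matrix (Fin n) (Fin n) ℝ}
    (hC : IsCompletelyPositive C) (hCs : C.IsSymm)
    {A : {A : Matrix (Fin n) (Fin n) ℝ // A.IsSymm}} (hA : IsPosStrictDiagDominant (A.val - C)) :
    A ∈ interior {A : {A : Matrix (Fin n) (Fin n) ℝ // A.IsSymm} | IsCompletelyPositive A.val} := by
  have hcont : Continuous fun B : {A : Matrix (Fin n) (Fin n) ℝ // A.IsSymm} => B.val - C :=
    continuous_subtype_val.sub continuous_const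
  rw [mem_interior_iff_mem_nhds]
  filter_upwards [hcont.continuousAt.preimage_mem_nhds
    (isOpen_setOf_isPosStrictDiagDominant.mem_nhds hA)] with B ⟨hpos, hdom⟩
  rw [← add_sub_cancel C B.val]
  exact hC.add (isCompletelyPositive_of_diagDominant (B.prop.sub hCs) (fun i j => (hpos i j).le)
    fun i => (hdom i).le)

section XiLam

variable {n : ℕ} (p : Fin n → ℝ) (lam : ℝ)

theorem XiLam_mulVec_one (hsum : ∑ j, p j = 1) : XiLam p lam *ᵥ (fun _ => 1) = p := by
  ext i
  simp only [XiLam, mulVec, dotProduct, Matrix.add_apply, Matrix.smul_apply, vecMulVec_apply,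
    diagonal_apply, smul_eq_mul, mul_one, Finset.sum_add_distrib, ← Finset.mul_sum, hsum,
    mul_ite, mul_zero, Finset.sum_ite_eq, Finset.mem_univ, if_true]
  ring

theorem XiLam_isSymm : (XiLam p lam).IsSymm :=
  (IsSymm.smul (transpose_vecMulVec p p) _).add ((isSymm_diagonal p).smul lam)

theorem XiLam_sub_eq :
    XiLam p lam - (1 - lam) ^ 2 • vecMulVec p p =
      lam • ((1 - lam) • vecMulVec p p + diagonal p) := by
  simp only [XiLam]
  module

theorem isPosStrictDiagDominant_XiLam_sub (hpos : ∀ j, 0 < p j) (hsum : ∑ j, p j = 1)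
    (hlam₀ : 0 < lam) (hlam₁ : lam < 1) :
    IsPosStrictDiagDominant (XiLam p lam - (1 - lam) ^ 2 • vecMulVec p p) := by
  have hlam : 0 < 1 - lam := sub_pos.mpr hlam₁
  rw [XiLam_sub_eq]
  refine ⟨fun i j => ?_, fun i => ?_⟩
  · rcases eq_or_ne i j with rfl | h
    · simp only [Matrix.smul_apply, Matrix.add_apply, vecMulVec_apply, diagonal_apply_eq,
        smul_eq_mul]
      have := hpos i
      positivity
    · simp only [Matrix.smul_apply, Matrix.add_apply, vecMulVec_apply, diagonal_apply_ne _ h,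
        smul_eq_mul, add_zero]
      have := hpos i
      have := hpos j
      positivity
  · have hrow : ∑ j, (lam • ((1 - lam) • vecMulVec p p + diagonal p)) i j =
        lam * ((1 - lam) * p i + p i) := by
      simp only [Matrix.smul_apply, Matrix.add_apply, vecMulVec_apply, diagonal_apply,
        smul_eq_mul, ← Finset.mul_sum, Finset.sum_add_distrib, hsum, Finset.sum_ite_eq,
        Finset.mem_univ, if_true, mul_one]
    rw [hrow]
    simp only [Matrix.smul_apply, Matrix.add_apply, vecMulVec_apply, diagonal_apply_eq,
      smul_eq_mul]
    -- the two sides differ by `λ pᵢ (λ + 2 (1 - λ) pᵢ)`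
    have hslack : 0 < lam * p i * (lam + 2 * (1 - lam) * p i) :=
      mul_pos (mul_pos hlam₀ (hpos i)) (add_pos hlam₀ (mul_pos (mul_pos two_pos hlam) (hpos i)))
    linarith

end XiLam

/-- For every `λ ∈ (0,1)`, the matrix `Ξ_λ = (1 − λ) p_o p_oᵀ + λ diag(p_o)` satisfies
`Ξ_λ 𝟙 = p_o` and lies in the interior (in the subspace of symmetric matrices) of the
set of completely positive matrices. -/
theorem XiLam_mem_interior_cp {n : ℕ}
    (p_o : Fin n → ℝ) (hpos : ∀ j, 0 < p_o j) (hsum : ∑ j, p_o j = 1)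
    (lam : ℝ) (hlam0 : 0 < lam) (hlam1 : lam < 1) :
    (XiLam p_o lam).mulVec (fun _ => (1 : ℝ)) = p_o ∧
      ∃ hs : (XiLam p_o lam).IsSymm,
        (⟨XiLam p_o lam, hs⟩ : {A : Matrix (Fin n) (Fin n) ℝ // A.IsSymm}) ∈
          interior {A : {A : Matrix (Fin n) (Fin n) ℝ // A.IsSymm} |
            IsCompletelyPositive A.val} := by
  refine ⟨XiLam_mulVec_one p_o lam hsum, XiLam_isSymm p_o lam, ?_⟩
  exact mem_interior_setOf_isCompletelyPositive
    ((isCompletelyPositive_vecMulVec fun j => (hpos j).le).smul (sq_nonneg (1 - lam)))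
    (IsSymm.smul (transpose_vecMulVec p_o p_o) _)
    (isPosStrictDiagDominant_XiLam_sub p_o lam hpos hsum hlam0 hlam1)
end

section
/- If Ξ ∈ ℝ^{n×n} is completely positive and Ξ 𝟙 = p_o, then diag(p_o) − Ξ and Ξ − p_o p_oᵀ are both positive semidefinite; that is, p_o p_oᵀ ⪯ Ξ ⪯ diag(p_o) in the semidefinite (Loewner) order. -/
/-!
Write `Ξ = B Bᵀ` with `B ≥ 0`. The upper bound is a Laplacian inequality: the quadratic form of
`diag(Ξ 𝟙) - Ξ` is `½ ∑ᵢⱼ Ξᵢⱼ (xᵢ - xⱼ)²`, which is nonnegative because `Ξ ≥ 0` entrywise.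
For the lower bound put `s = Bᵀ 𝟙`; then `p_o = B s` and `sᵀ s = 𝟙ᵀ Ξ 𝟙 = ∑ p_o = 1`, so
`Ξ - p_o p_oᵀ = B (I - s sᵀ) Bᵀ`, and `I - s sᵀ ⪰ 0` by Cauchy–Schwarz.
-/

open Matrix BigOperators

namespace Matrix

variable {ι κ R : Type*} [Fintype ι] [Fintype κ]

section CommRing

variable [CommRing R]

theorem dotProduct_diagonal_mulVec_one_sub_mulVec [DecidableEq ι] (A : Matrix ι ι R)
    (x : ι → R) :
    x ⬝ᵥ (diagonal (A *ᵥ 1) - A) *ᵥ x = ∑ i, ∑ j, A i j * x i * (x i - x j) := by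
  have hdiag : diagonal (A *ᵥ 1) *ᵥ x = fun i => (∑ j, A i j) * x i := by
    ext i
    rw [mulVec_diagonal]
    simp [mulVec, dotProduct]
  rw [sub_mulVec, hdiag, dotProduct_sub]
  simp only [dotProduct, mulVec, Finset.sum_mul, Finset.mul_sum, ← Finset.sum_sub_distrib]
  exact Finset.sum_congr rfl fun i _ => Finset.sum_congr rfl fun j _ => by ring

theorem two_mul_dotProduct_diagonal_mulVec_one_sub_mulVec [DecidableEq ι] {A : Matrix ι ι R}
    (hA : A.IsSymm) (x : ι → R) :
    2 * (x ⬝ᵥ (diagonal (A *ᵥ 1) - A) *ᵥ x) = ∑ i, ∑ j, A i j * (x i - x j) ^ 2 := by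
  have hswap : ∑ i, ∑ j, A i j * x i * (x i - x j) = ∑ i, ∑ j, A i j * x j * (x j - x i) := by
    rw [Finset.sum_comm]
    exact Finset.sum_congr rfl fun i _ => Finset.sum_congr rfl fun j _ => by rw [hA.apply i j]
  rw [two_mul, dotProduct_diagonal_mulVec_one_sub_mulVec]
  nth_rw 2 [hswap]
  rw [← Finset.sum_add_distrib]
  refine Finset.sum_congr rfl fun i _ => ?_
  rw [← Finset.sum_add_distrib]
  exact Finset.sum_congr rfl fun j _ => by ring

theorem dotProduct_one_sub_vecMulVec_self_mulVec [DecidableEq ι] (s x : ι → R) :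
    x ⬝ᵥ (1 - vecMulVec s s) *ᵥ x = x ⬝ᵥ x - (s ⬝ᵥ x) ^ 2 := by
  rw [sub_mulVec, one_mulVec, dotProduct_sub, vecMulVec_mulVec, op_smul_eq_smul, dotProduct_smul,
    smul_eq_mul, dotProduct_comm x s, sq]

end CommRing

variable [CommRing R] [LinearOrder R] [IsStrictOrderedRing R] [StarRing R] [TrivialStar R]

theorem posSemidef_diagonal_mulVec_one_sub [DecidableEq ι] {A : Matrix ι ι R}
    (hA : A.IsHermitian) (hA₀ : ∀ i j, 0 ≤ A i j) :
    (diagonal (A *ᵥ 1) - A).PosSemidef := by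
  refine .of_dotProduct_mulVec_nonneg ((isHermitian_diagonal _).sub hA) fun x => ?_
  rw [star_trivial, ← mul_nonneg_iff_of_pos_left two_pos,
    two_mul_dotProduct_diagonal_mulVec_one_sub_mulVec (isHermitian_iff_isSymm.1 hA)]
  exact Finset.sum_nonneg fun i _ => Finset.sum_nonneg fun j _ =>
    mul_nonneg (hA₀ i j) (sq_nonneg _)

theorem posSemidef_one_sub_vecMulVec_self [DecidableEq ι] {s : ι → R} (hs : s ⬝ᵥ s ≤ 1) :
    (1 - vecMulVec s s).PosSemidef := by
  refine .of_dotProduct_mulVec_nonneg (isHermitian_one.sub (by simp [IsHermitian])) fun x => ?_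
  have hx : 0 ≤ x ⬝ᵥ x := Finset.sum_nonneg fun i _ => mul_self_nonneg (x i)
  rw [star_trivial, dotProduct_one_sub_vecMulVec_self_mulVec, sub_nonneg]
  calc (s ⬝ᵥ x) ^ 2 ≤ (s ⬝ᵥ s) * (x ⬝ᵥ x) := by
        simpa only [dotProduct, sq] using Finset.sum_mul_sq_le_sq_mul_sq Finset.univ s x
    _ ≤ x ⬝ᵥ x := mul_le_of_le_one_left hx hs

theorem posSemidef_mul_transpose_sub_vecMulVec_mulVec (B : Matrix ι κ R) {s : κ → R}
    (hs : s ⬝ᵥ s ≤ 1) :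
    (B * Bᵀ - vecMulVec (B *ᵥ s) (B *ᵥ s)).PosSemidef := by
  classical
  have h := (posSemidef_one_sub_vecMulVec_self hs).mul_mul_conjTranspose_same B
  rwa [conjTranspose_eq_transpose_of_trivial, Matrix.mul_sub, Matrix.sub_mul, Matrix.mul_one,
    mul_vecMulVec, vecMulVec_mul, vecMul_transpose] at h

end Matrix

namespace IsCompletelyPositive

variable {n : ℕ} {Ξ : Matrix (Fin n) (Fin n) ℝ}

theorem isHermitian (hΞ : IsCompletelyPositive Ξ) : Ξ.IsHermitian := by
  obtain ⟨k, B, -, rfl⟩ := hΞ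
  exact isHermitian_mul_conjTranspose_self B

theorem nonneg (hΞ : IsCompletelyPositive Ξ) (i j : Fin n) : 0 ≤ Ξ i j := by
  obtain ⟨k, B, hB, rfl⟩ := hΞ
  rw [mul_apply]
  exact Finset.sum_nonneg fun c _ => mul_nonneg (hB i c) (hB j c)

end IsCompletelyPositive

theorem cp_loewner_bounds_general {n : ℕ}
    (p_o : Fin n → ℝ) (hsum : ∑ j, p_o j = 1)
    (Ξ : Matrix (Fin n) (Fin n) ℝ)
    (hCP : IsCompletelyPositive Ξ) (hrow : Ξ.mulVec (fun _ => (1 : ℝ)) = p_o) :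
    (Matrix.diagonal p_o - Ξ).PosSemidef ∧
      (Ξ - Matrix.vecMulVec p_o p_o).PosSemidef := by
  refine ⟨hrow ▸ posSemidef_diagonal_mulVec_one_sub hCP.isHermitian hCP.nonneg, ?_⟩
  obtain ⟨k, B, -, rfl⟩ := hCP
  set s : Fin k → ℝ := Bᵀ *ᵥ 1
  have hBs : B *ᵥ s = p_o := by rw [mulVec_mulVec]; exact hrow
  have hs : s ⬝ᵥ s = 1 := by
    rw [dotProduct_mulVec, vecMul_transpose, hBs, dotProduct_one, hsum]
  exact hBs ▸ posSemidef_mul_transpose_sub_vecMulVec_mulVec B hs.le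

/-- If `Ξ` is completely positive with `Ξ 𝟙 = p_o`, then
`p_o p_oᵀ ⪯ Ξ ⪯ diag(p_o)` in the Loewner order. -/
theorem cp_loewner_bounds {n : ℕ}
    (p_o : Fin n → ℝ) (hpos : ∀ j, 0 < p_o j) (hsum : ∑ j, p_o j = 1)
    (Ξ : Matrix (Fin n) (Fin n) ℝ)
    (hCP : IsCompletelyPositive Ξ) (hrow : Ξ.mulVec (fun _ => (1 : ℝ)) = p_o) :
    (Matrix.diagonal p_o - Ξ).PosSemidef ∧
      (Ξ - Matrix.vecMulVec p_o p_o).PosSemidef :=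
  cp_loewner_bounds_general p_o hsum Ξ hCP hrow
end

section
/- For every symmetric V̄ ∈ ℝ^{n×n}, the primal completely positive program admits an optimal solution of CP-rank at most n: there exist a completely positive Ξ* with Ξ* 𝟙 = p_o minimizing tr(Ξ V̄) over the feasible set, and an entrywise-nonnegative matrix B ∈ ℝ^{n×n} such that Ξ* = B Bᵀ. -/
open Matrix BigOperators

/-!
A factorization `Ξ = ∑ₖ bₖ bₖᵀ` with nonnegative columns `bₖ` enters the program only through
`Ξ 𝟙 = ∑ₖ (𝟙 ⬝ bₖ) bₖ` and `tr (Ξ V̄) = ∑ₖ bₖ ⬝ V̄ bₖ`, and scaling column `k` by `√λₖ` weights both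
sums by `λ`. With more than `n` nonzero columns the vectors `(𝟙 ⬝ bₖ) bₖ` are linearly dependent,
and moving `λ` from `𝟙` along a dependence (in the direction that does not increase the objective)
until a weight vanishes deletes a column. So every feasible point is dominated by one with an
`n`-column factor; those factors form a compact set, on which the objective attains its minimum.
-/

theorem exists_nonneg_reweight_of_finrank_lt_card {𝕜 E ι : Type*} [Field 𝕜] [LinearOrder 𝕜]
    [IsStrictOrderedRing 𝕜] [AddCommGroup E] [Module 𝕜 E] [FiniteDimensional 𝕜 E] [Fintype ι]
    (f : E →ₗ[𝕜] 𝕜) (w : ι → E) (hw : ∀ i, 0 < f (w i)) (q : ι → 𝕜)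
    (hcard : Module.finrank 𝕜 E < Fintype.card ι) :
    ∃ c : ι → 𝕜, (∀ i, 0 ≤ c i) ∧ (∃ i, c i = 0) ∧
      ∑ i, c i • w i = ∑ i, w i ∧ ∑ i, c i * q i ≤ ∑ i, q i := by
  obtain ⟨ν, hνw, i₁, hi₁⟩ := Fintype.not_linearIndependent_iff.mp
    fun h => h.fintype_card_le_finrank.not_gt hcard
  obtain ⟨μ, hμw, hμq, i₂, hi₂⟩ : ∃ μ : ι → 𝕜,
      ∑ i, μ i • w i = 0 ∧ ∑ i, μ i * q i ≤ 0 ∧ ∃ i, μ i ≠ 0 := by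
    rcases le_total (∑ i, ν i * q i) 0 with h | h
    · exact ⟨ν, hνw, h, i₁, hi₁⟩
    · refine ⟨-ν, ?_, ?_, i₁, neg_ne_zero.mpr hi₁⟩
      · simp only [Pi.neg_apply, neg_smul, Finset.sum_neg_distrib, hνw, neg_zero]
      · simpa only [Pi.neg_apply, neg_mul, Finset.sum_neg_distrib, neg_nonpos] using h
  -- the functional `f` is positive on every `w i`, so the dependence `μ` has a negative entry
  obtain ⟨i₃, hi₃⟩ : ∃ i, μ i < 0 := by
    by_contra! hμ
    have hfμ : ∑ i, μ i * f (w i) = 0 := by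
      simpa only [map_sum, map_smul, smul_eq_mul, map_zero] using congrArg f hμw
    have := (Finset.sum_eq_zero_iff_of_nonneg fun i _ => mul_nonneg (hμ i) (hw i).le).mp hfμ
      i₂ (Finset.mem_univ _)
    exact hi₂ ((mul_eq_zero.mp this).resolve_right (hw i₂).ne')
  obtain ⟨i₀, -, hi₀⟩ := Finset.univ.exists_min_image μ ⟨i₃, Finset.mem_univ _⟩
  have hμ₀ : μ i₀ < 0 := (hi₀ i₃ (Finset.mem_univ _)).trans_lt hi₃
  -- step from `1` along `μ` until the weight at the most negative entry `μ i₀` reaches `0`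
  refine ⟨fun i => 1 - μ i / μ i₀, fun i => ?_, ⟨i₀, by simp [hμ₀.ne]⟩, ?_, ?_⟩
  · exact sub_nonneg.mpr ((div_le_one_of_neg hμ₀).mpr (hi₀ i (Finset.mem_univ _)))
  · simp only [sub_smul, one_smul, Finset.sum_sub_distrib, div_eq_inv_mul, mul_smul,
      ← Finset.smul_sum, hμw, smul_zero, sub_zero]
  · have : 0 ≤ (∑ i, μ i * q i) / μ i₀ := div_nonneg_of_nonpos hμq hμ₀.le
    simp only [sub_mul, one_mul, Finset.sum_sub_distrib, div_mul_eq_mul_div, ← Finset.sum_div]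
    linarith

theorem mul_transpose_submatrix_succAbove {R ι : Type*} [Fintype ι] [NonUnitalNonAssocSemiring R]
    {m : ℕ} (C : Matrix ι (Fin (m + 1)) R) (k₀ : Fin (m + 1)) (hC : ∀ i, C i k₀ = 0) :
    C.submatrix id k₀.succAbove * (C.submatrix id k₀.succAbove)ᵀ = C * Cᵀ := by
  ext i j
  simp [mul_apply, Fin.sum_univ_succAbove _ k₀, hC]

theorem exists_nonneg_mul_transpose_eq_of_le {R ι : Type*} [Fintype ι]
    [NonUnitalNonAssocSemiring R] [Preorder R] {m n : ℕ} (hmn : m ≤ n) (B : Matrix ι (Fin m) R)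
    (hB : ∀ i k, 0 ≤ B i k) :
    ∃ C : Matrix ι (Fin n) R, (∀ i k, 0 ≤ C i k) ∧ C * Cᵀ = B * Bᵀ := by
  induction n, hmn using Nat.le_induction with
  | base => exact ⟨B, hB, rfl⟩
  | succ n _ ih =>
    obtain ⟨C, hC, hCB⟩ := ih
    refine ⟨of fun i => Fin.snoc (C i) 0, fun i k => ?_, ?_⟩
    · refine Fin.lastCases ?_ (fun k => ?_) k <;> simp [hC]
    · rw [← hCB, ← mul_transpose_submatrix_succAbove _ (Fin.last n) (by simp)]
      ext i j
      simp [mul_apply]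

section

variable {ι κ : Type*} [Fintype ι] [Fintype κ]

theorem mul_diagonal_mul_transpose_mulVec_one [DecidableEq κ] (B : Matrix ι κ ℝ) (d : κ → ℝ) :
    (B * diagonal d * Bᵀ) *ᵥ (fun _ => 1) =
      ∑ k, d k • ((Bᵀ *ᵥ fun _ => 1) k • fun i => B i k) := by
  ext i
  rw [← mulVec_mulVec, ← mulVec_mulVec]
  simp only [mulVec, dotProduct, diagonal_apply, ite_mul, zero_mul, Finset.sum_ite_eq,
    Finset.mem_univ, if_true, Finset.sum_apply, Pi.smul_apply, smul_eq_mul, transpose_apply]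
  exact Finset.sum_congr rfl fun k _ => by ring

theorem trace_mul_diagonal_mul_transpose_mul [DecidableEq κ] (B : Matrix ι κ ℝ) (d : κ → ℝ)
    (V : Matrix ι ι ℝ) :
    trace (B * diagonal d * Bᵀ * V) = ∑ k, d k * (Bᵀ * V * B) k k := by
  rw [Matrix.mul_assoc, Matrix.mul_assoc, trace_mul_comm]
  simp [trace, Matrix.mul_assoc, diagonal_mul]

theorem exists_zero_col_nonneg_factor_of_card_lt (V : Matrix ι ι ℝ) (B : Matrix ι κ ℝ)
    (hB : ∀ i k, 0 ≤ B i k) (hcard : Fintype.card ι < Fintype.card κ) :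
    ∃ C : Matrix ι κ ℝ, (∀ i k, 0 ≤ C i k) ∧ (∃ k₀, ∀ i, C i k₀ = 0) ∧
      (C * Cᵀ) *ᵥ (fun _ => 1) = (B * Bᵀ) *ᵥ (fun _ => 1) ∧
      trace (C * Cᵀ * V) ≤ trace (B * Bᵀ * V) := by
  classical
  by_cases hzero : ∃ k₀, ∀ i, B i k₀ = 0
  · exact ⟨B, hB, hzero, rfl, le_rfl⟩
  push Not at hzero
  set s := Bᵀ *ᵥ fun _ => (1 : ℝ)
  have hs : ∀ k, 0 < s k := by
    intro k
    obtain ⟨i, hi⟩ := hzero k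
    simp only [s, mulVec, dotProduct, transpose_apply, mul_one]
    exact Finset.sum_pos' (fun j _ => hB j k) ⟨i, Finset.mem_univ _, (hB i k).lt_of_ne' hi⟩
  have hfw : ∀ k, 0 < (∑ i, LinearMap.proj i : (ι → ℝ) →ₗ[ℝ] ℝ) (s k • (fun i => B i k)) := by
    intro k
    have hBs : ∑ i, B i k = s k := by simp [s, mulVec, dotProduct]
    simp only [LinearMap.sum_apply, LinearMap.coe_proj, Function.eval, Pi.smul_apply,
      smul_eq_mul, ← Finset.mul_sum]
    exact mul_pos (hs k) (hBs ▸ hs k)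
  obtain ⟨c, hc, ⟨k₀, hk₀⟩, hcw, hcq⟩ := exists_nonneg_reweight_of_finrank_lt_card
    (∑ i, LinearMap.proj i) (fun k => s k • (fun i => B i k)) hfw
    (fun k => (Bᵀ * V * B) k k) (by simpa using hcard)
  have hCC : B * diagonal (fun k => √(c k)) * (B * diagonal fun k => √(c k))ᵀ =
      B * diagonal c * Bᵀ := by
    rw [transpose_mul, diagonal_transpose, Matrix.mul_assoc, ← Matrix.mul_assoc (diagonal _),
      diagonal_mul_diagonal, ← Matrix.mul_assoc]
    simp only [Real.mul_self_sqrt (hc _)]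
  have hB1 : B * Bᵀ = B * diagonal (fun _ : κ => (1 : ℝ)) * Bᵀ := by simp
  refine ⟨B * diagonal fun k => √(c k), fun i k => ?_, ⟨k₀, fun i => by simp [hk₀]⟩, ?_, ?_⟩
  · simp only [mul_diagonal]
    exact mul_nonneg (hB i k) (Real.sqrt_nonneg _)
  · rw [hCC, hB1, mul_diagonal_mul_transpose_mulVec_one, mul_diagonal_mul_transpose_mulVec_one,
      hcw]
    simp [s]
  · rw [hCC, hB1, trace_mul_diagonal_mul_transpose_mul, trace_mul_diagonal_mul_transpose_mul]
    simpa using hcq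

theorem exists_nonneg_factor_of_card_le (V : Matrix ι ι ℝ) {r : ℕ}
    (hr : Fintype.card ι ≤ r) {K : ℕ} (B : Matrix ι (Fin K) ℝ) (hB : ∀ i k, 0 ≤ B i k) :
    ∃ C : Matrix ι (Fin r) ℝ, (∀ i k, 0 ≤ C i k) ∧
      (C * Cᵀ) *ᵥ (fun _ => 1) = (B * Bᵀ) *ᵥ (fun _ => 1) ∧
      trace (C * Cᵀ * V) ≤ trace (B * Bᵀ * V) := by
  induction K using Nat.strong_induction_on with
  | _ K ih =>
  by_cases hK : K ≤ r
  · obtain ⟨C, hC, hCB⟩ := exists_nonneg_mul_transpose_eq_of_le hK B hB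
    exact ⟨C, hC, by rw [hCB], by rw [hCB]⟩
  obtain ⟨m, rfl⟩ : ∃ m, K = m + 1 := ⟨K - 1, by omega⟩
  obtain ⟨C, hC, ⟨k₀, hk₀⟩, hC1, hCV⟩ :=
    exists_zero_col_nonneg_factor_of_card_lt V B hB (by rw [Fintype.card_fin]; omega)
  obtain ⟨D, hD, hD1, hDV⟩ := ih m (by omega) (C.submatrix id k₀.succAbove) fun i k => hC _ _
  rw [mul_transpose_submatrix_succAbove C k₀ hk₀] at hD1 hDV
  exact ⟨D, hD, hD1.trans hC1, hDV.trans hCV⟩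

theorem sq_le_mul_transpose_mulVec_one (B : Matrix ι κ ℝ) (hB : ∀ i k, 0 ≤ B i k) (i : ι)
    (k : κ) : B i k ^ 2 ≤ ((B * Bᵀ) *ᵥ fun _ => 1) i := by
  have hcol : B i k ≤ ∑ j, B j k := Finset.single_le_sum (fun j _ => hB j k) (Finset.mem_univ i)
  calc B i k ^ 2 ≤ B i k * ∑ j, B j k := by
        rw [sq]; exact mul_le_mul_of_nonneg_left hcol (hB i k)
    _ ≤ ∑ k', B i k' * ∑ j, B j k' :=
        Finset.single_le_sum (f := fun k' => B i k' * ∑ j, B j k')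
          (fun k' _ => mul_nonneg (hB i k') (Finset.sum_nonneg fun j _ => hB j k'))
          (Finset.mem_univ k)
    _ = ((B * Bᵀ) *ᵥ fun _ => 1) i := by
        rw [← mulVec_mulVec]; simp [mulVec, dotProduct]

theorem isCompact_setOf_nonneg_mul_transpose_mulVec_one_eq (p : ι → ℝ) :
    IsCompact {B : Matrix ι κ ℝ | (∀ i k, 0 ≤ B i k) ∧ (B * Bᵀ) *ᵥ (fun _ => 1) = p} := by
  have hbox : IsCompact (Set.univ.pi fun i => Set.univ.pi fun (_ : κ) => Set.Icc 0 √(p i)) :=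
    isCompact_univ_pi fun _ => isCompact_univ_pi fun _ => isCompact_Icc
  refine hbox.of_isClosed_subset ?_ ?_
  · have hnonneg : IsClosed {B : Matrix ι κ ℝ | ∀ i k, 0 ≤ B i k} := by
      simp only [Set.ofPred_forall]
      exact isClosed_iInter fun i => isClosed_iInter fun k =>
        isClosed_le continuous_const ((continuous_apply k).comp (continuous_apply i))
    have hmarg : IsClosed {B : Matrix ι κ ℝ | (B * Bᵀ) *ᵥ (fun _ => 1) = p} :=
      isClosed_eq ((continuous_id.matrix_mul continuous_id.matrix_transpose).matrix_mulVec
        continuous_const) continuous_const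
    exact hnonneg.inter hmarg
  · rintro B ⟨hB, hBp⟩ i - k -
    refine ⟨hB i k, Real.le_sqrt_of_sq_le ?_⟩
    exact hBp ▸ sq_le_mul_transpose_mulVec_one B hB i k

end

theorem cp_program_min_of_cp_rank_le_general {n : ℕ}
    (p_o : Fin n → ℝ) (hpos : ∀ j, 0 < p_o j)
    (Vbar : Matrix (Fin n) (Fin n) ℝ) :
    ∃ (Ξstar : Matrix (Fin n) (Fin n) ℝ) (B : Matrix (Fin n) (Fin n) ℝ),
      IsCompletelyPositive Ξstar ∧ Ξstar.mulVec (fun _ => (1 : ℝ)) = p_o ∧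
      (∀ Ξ : Matrix (Fin n) (Fin n) ℝ,
        IsCompletelyPositive Ξ → Ξ.mulVec (fun _ => (1 : ℝ)) = p_o →
        Matrix.trace (Ξstar * Vbar) ≤ Matrix.trace (Ξ * Vbar)) ∧
      (∀ i j, 0 ≤ B i j) ∧ Ξstar = B * Bᵀ := by
  have hfeas : diagonal (fun i => √(p_o i)) ∈ {B : Matrix (Fin n) (Fin n) ℝ |
      (∀ i k, 0 ≤ B i k) ∧ (B * Bᵀ) *ᵥ (fun _ => 1) = p_o} := by
    refine ⟨fun i k => ?_, ?_⟩
    · by_cases h : i = k <;> simp [h]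
    · ext i
      simp [mulVec_diagonal, Real.mul_self_sqrt (hpos i).le]
  obtain ⟨B, ⟨hB, hBp⟩, hBmin⟩ :=
    (isCompact_setOf_nonneg_mul_transpose_mulVec_one_eq p_o).exists_isMinOn ⟨_, hfeas⟩
      (continuous_id.matrix_mul continuous_id.matrix_transpose |>.matrix_mul
        continuous_const |>.matrix_trace).continuousOn
  refine ⟨B * Bᵀ, B, ⟨n, B, hB, rfl⟩, hBp, ?_, hB, rfl⟩
  rintro _ ⟨k, B', hB', rfl⟩ hΞp
  obtain ⟨C, hC, hC1, hCV⟩ := exists_nonneg_factor_of_card_le Vbar (Fintype.card_fin n).le B' hB'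
  exact (hBmin ⟨hC, hC1.trans hΞp⟩).trans hCV

/-- For every symmetric `V̄`, the primal completely positive program admits an optimal
solution of CP-rank at most `n`: there is a feasible minimizer `Ξ*` together with an
entrywise-nonnegative `n × n` matrix `B` such that `Ξ* = B Bᵀ`. -/
theorem cp_program_min_of_cp_rank_le {n : ℕ}
    (p_o : Fin n → ℝ) (hpos : ∀ j, 0 < p_o j) (hsum : ∑ j, p_o j = 1)
    (Vbar : Matrix (Fin n) (Fin n) ℝ) (hV : Vbar.IsSymm) :
    ∃ (Ξstar : Matrix (Fin n) (Fin n) ℝ) (B : Matrix (Fin n) (Fin n) ℝ),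
      IsCompletelyPositive Ξstar ∧ Ξstar.mulVec (fun _ => (1 : ℝ)) = p_o ∧
      (∀ Ξ : Matrix (Fin n) (Fin n) ℝ,
        IsCompletelyPositive Ξ → Ξ.mulVec (fun _ => (1 : ℝ)) = p_o →
        Matrix.trace (Ξstar * Vbar) ≤ Matrix.trace (Ξ * Vbar)) ∧
      (∀ i j, 0 ≤ B i j) ∧ Ξstar = B * Bᵀ :=
  cp_program_min_of_cp_rank_le_general p_o hpos Vbar
end
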